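/- arXiv:1202.5668 — 4 statements merged into one kernel-verified Lean document; each statement's English description precedes it below -/
import Mathlib

section
/- Let f_k(n) be the number of ordered rooted binary trees of size n with largest caterpillar subtree of size at most k, where k ≥ 2. Then f_k(1) = 1 and for n ≥ 2, f_k(n) = Σ_{i=1}^{n−1} f_k(i) f_k(n−i) − [n = k+1]·2^{k−1}, where [n = k+1] is 1 if n = k+1 and 0 otherwise. -/
/-- Ordered rooted binary trees: a tree is a leaf or an internal node with two ordered children. -/
inductive BTree where
  | leaf : BTree
  | node : BTree → BTree → BTree

/-- Size of a tree = number of leaves. -/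
def BTree.size : BTree → ℕ
  | .leaf => 1
  | .node l r => l.size + r.size

/-- A tree is a caterpillar if every internal node has at least one leaf child. -/
def BTree.isCaterpillar : BTree → Prop
  | .leaf => True
  | .node l r => (l = .leaf ∨ r = .leaf) ∧ l.isCaterpillar ∧ r.isCaterpillar

/-- The list of all subtrees (rooted at some node) of a tree. -/
def BTree.subtrees : BTree → List BTree
  | .leaf => [.leaf]
  | .node l r => .node l r :: (l.subtrees ++ r.subtrees)

/-- γ(t): the size of the biggest caterpillar subtree of `t`. -/
noncomputable def BTree.gamma (t : BTree) : ℕ :=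
  sSup {m | ∃ s ∈ t.subtrees, s.isCaterpillar ∧ s.size = m}

/-- `fcount k n`: number of ordered rooted binary trees of size `n` with γ ≤ k. -/
noncomputable def fcount (k n : ℕ) : ℕ :=
  Nat.card {t : BTree // t.size = n ∧ t.gamma ≤ k}

/-! A tree of size `n ≥ 2` is `node l r`, and `γ (node l r) ≤ k` iff `γ l ≤ k`, `γ r ≤ k` and
`node l r` is not a caterpillar of size `> k`. The convolution `Σ f_k(i) f_k(n-i)` counts the trees
whose two children have `γ ≤ k`; among them, a caterpillar has a leaf child and a caterpillar child
of size `γ ≤ k`, so the ones with `γ > k` are exactly the caterpillars of size `n = k + 1`. There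
are `2 ^ (m - 2)` caterpillars of size `m ≥ 2`, since each one of size `m + 1 ≥ 3` is obtained from
a unique one of size `m` by attaching a leaf on the left or on the right. -/

open Finset

namespace BTree

theorem one_le_size : ∀ t : BTree, 1 ≤ t.size
  | leaf => le_rfl
  | node l _ => le_add_right l.one_le_size

theorem size_eq_one_iff {t : BTree} : t.size = 1 ↔ t = leaf := by
  cases t with
  | leaf => simp [size]
  | node l r => have := l.one_le_size; have := r.one_le_size; simp [size]; omega

theorem mem_subtrees_self : ∀ t : BTree, t ∈ t.subtrees
  | leaf => List.mem_singleton_self _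
  | node _ _ => List.mem_cons_self

theorem size_le_of_mem_subtrees : ∀ {s t : BTree}, s ∈ t.subtrees → s.size ≤ t.size
  | _, leaf, h => by rw [List.mem_singleton.1 h]
  | s, node l r, h => by
    simp only [subtrees, List.mem_cons, List.mem_append] at h
    rcases h with rfl | h | h
    · exact le_rfl
    · exact (size_le_of_mem_subtrees h).trans (le_add_right le_rfl)
    · exact (size_le_of_mem_subtrees h).trans (le_add_left le_rfl)

theorem gamma_le_iff {t : BTree} {k : ℕ} :
    t.gamma ≤ k ↔ ∀ s ∈ t.subtrees, s.isCaterpillar → s.size ≤ k := by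
  have hbdd : BddAbove {m | ∃ s ∈ t.subtrees, s.isCaterpillar ∧ s.size = m} := by
    refine ⟨t.size, ?_⟩
    rintro _ ⟨s, hs, -, rfl⟩
    exact size_le_of_mem_subtrees hs
  rw [gamma, csSup_le_iff' hbdd]
  exact ⟨fun h s hs hc => h _ ⟨s, hs, hc, rfl⟩, fun h _ ⟨s, hs, hc, hm⟩ => hm ▸ h s hs hc⟩

theorem gamma_eq_size_of_isCaterpillar {t : BTree} (ht : t.isCaterpillar) : t.gamma = t.size :=
  eq_of_forall_ge_iff fun _ => gamma_le_iff.trans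
    ⟨fun h => h t t.mem_subtrees_self ht, fun h _ hs _ => (size_le_of_mem_subtrees hs).trans h⟩

theorem gamma_leaf : leaf.gamma = 1 :=
  gamma_eq_size_of_isCaterpillar trivial

theorem gamma_node_le_iff {l r : BTree} {k : ℕ} :
    (node l r).gamma ≤ k ↔
      l.gamma ≤ k ∧ r.gamma ≤ k ∧ ((node l r).isCaterpillar → l.size + r.size ≤ k) := by
  simp only [gamma_le_iff, subtrees, List.mem_cons, List.mem_append, or_imp, forall_and,
    forall_eq, size]
  tauto

theorem size_le_succ_of_isCaterpillar {l r : BTree} {k : ℕ} (hc : (node l r).isCaterpillar)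
    (hl : l.gamma ≤ k) (hr : r.gamma ≤ k) : l.size + r.size ≤ k + 1 := by
  obtain ⟨hleaf, hcl, hcr⟩ := hc
  rw [gamma_eq_size_of_isCaterpillar hcl] at hl
  rw [gamma_eq_size_of_isCaterpillar hcr] at hr
  rcases hleaf with rfl | rfl <;> simp only [size] at * <;> omega

theorem gamma_le_of_isCaterpillar_node {l r : BTree} {k : ℕ} (hc : (node l r).isCaterpillar)
    (hs : l.size + r.size = k + 1) : l.gamma ≤ k ∧ r.gamma ≤ k := by
  obtain ⟨-, hcl, hcr⟩ := hc
  rw [gamma_eq_size_of_isCaterpillar hcl, gamma_eq_size_of_isCaterpillar hcr]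
  have := l.one_le_size
  have := r.one_le_size
  omega

theorem exists_node_gamma_le_iff {t : BTree} {k : ℕ} (ht : 2 ≤ t.size) :
    (∃ l r, t = node l r ∧ l.gamma ≤ k ∧ r.gamma ≤ k) ↔
      t.gamma ≤ k ∨ t.isCaterpillar ∧ t.size = k + 1 := by
  cases t with
  | leaf => simp [size] at ht
  | node l r =>
    simp only [node.injEq, and_assoc, exists_and_left, exists_eq_left', gamma_node_le_iff, size]
    constructor
    · rintro ⟨hl, hr⟩
      by_cases hc : (node l r).isCaterpillar
      · have := size_le_succ_of_isCaterpillar hc hl hr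
        by_cases hk : l.size + r.size ≤ k
        · exact .inl ⟨hl, hr, fun _ => hk⟩
        · exact .inr ⟨hc, by omega⟩
      · exact .inl ⟨hl, hr, hc.elim⟩
    · rintro (⟨hl, hr, -⟩ | ⟨hc, hs⟩)
      · exact ⟨hl, hr⟩
      · exact gamma_le_of_isCaterpillar_node hc hs

theorem not_gamma_le_of_isCaterpillar {t : BTree} {k : ℕ} (hc : t.isCaterpillar)
    (hs : t.size = k + 1) : ¬t.gamma ≤ k := by
  rw [gamma_eq_size_of_isCaterpillar hc, hs]
  exact Nat.not_succ_le_self k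

def decEq : (s t : BTree) → Decidable (s = t)
  | leaf, leaf => isTrue rfl
  | leaf, node _ _ | node _ _, leaf => isFalse nofun
  | node l r, node l' r' =>
    haveI := decEq l l'
    haveI := decEq r r'
    decidable_of_iff (l = l' ∧ r = r') (by simp)

instance : DecidableEq BTree := decEq

def ofSize : ℕ → Finset BTree
  | 0 => ∅
  | 1 => {leaf}
  | n + 2 => (univ : Finset (Fin (n + 1))).biUnion fun i =>
      (ofSize (i + 1) ×ˢ ofSize (n + 1 - i)).image fun p => node p.1 p.2

theorem mem_ofSize {t : BTree} {n : ℕ} : t ∈ ofSize n ↔ t.size = n := by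
  induction t generalizing n with
  | leaf =>
    match n with
    | 0 | 1 | n + 2 => simp [ofSize, size]
  | node l r ihl ihr =>
    have := l.one_le_size
    have := r.one_le_size
    match n with
    | 0 | 1 => simp [ofSize, size]; omega
    | n + 2 =>
      simp only [ofSize, mem_biUnion, mem_univ, true_and, mem_image, mem_product, Prod.exists,
        node.injEq, size]
      constructor
      · rintro ⟨i, _, _, ⟨hl, hr⟩, rfl, rfl⟩
        rw [ihl] at hl
        rw [ihr] at hr
        omega
      · intro h
        exact ⟨⟨l.size - 1, by omega⟩, l, r, ⟨ihl.2 (by simp; omega), ihr.2 (by simp; omega)⟩,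
          rfl, rfl⟩

open scoped Classical in
theorem sum_card_mul_card_eq_card_node (p : BTree → Prop) [DecidablePred p] (n : ℕ) :
    ∑ i ∈ Ico 1 n, #{t ∈ ofSize i | p t} * #{t ∈ ofSize (n - i) | p t} =
      #{t ∈ ofSize n | ∃ l r, t = node l r ∧ p l ∧ p r} := by
  simp only [← card_product]
  rw [← card_sigma]
  refine card_nbij (fun x => node x.2.1 x.2.2) ?_ ?_ ?_
  · rintro ⟨i, l, r⟩ h
    simp only [coe_sigma, Set.mem_sigma_iff, mem_coe, mem_Ico, mem_product, mem_filter,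
      mem_ofSize] at h
    simp only [coe_filter, Set.mem_ofPred_eq, mem_ofSize, size]
    exact ⟨by omega, l, r, rfl, h.2.1.2, h.2.2.2⟩
  · rintro ⟨i, l, r⟩ h ⟨j, l', r'⟩ h' heq
    simp only [coe_sigma, Set.mem_sigma_iff, mem_coe, mem_Ico, mem_product, mem_filter,
      mem_ofSize] at h h'
    obtain ⟨rfl, rfl⟩ := node.inj heq
    have : i = j := h.2.1.1.symm.trans h'.2.1.1
    subst this
    rfl
  · intro t ht
    obtain ⟨ht, l, r, rfl, hl, hr⟩ := mem_filter.1 ht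
    rw [mem_ofSize, size] at ht
    have := l.one_le_size
    have := r.one_le_size
    refine ⟨⟨l.size, l, r⟩, ?_, rfl⟩
    simp only [coe_sigma, Set.mem_sigma_iff, mem_coe, mem_Ico, mem_product, mem_filter,
      mem_ofSize]
    exact ⟨⟨by omega, by omega⟩, ⟨trivial, hl⟩, by omega, hr⟩

open scoped Classical in
theorem card_caterpillars_succ {n : ℕ} (hn : 2 ≤ n) :
    #{t ∈ ofSize (n + 1) | t.isCaterpillar} = 2 * #{t ∈ ofSize n | t.isCaterpillar} := by
  set C := {t ∈ ofSize n | t.isCaterpillar}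
  have hsplit : {t ∈ ofSize (n + 1) | t.isCaterpillar} =
      C.image (node leaf) ∪ C.image (node · leaf) := by
    ext t
    cases t with
    | leaf => simp [C, mem_ofSize, size]; omega
    | node l r =>
      simp only [C, mem_union, mem_image, mem_filter, mem_ofSize, node.injEq, size, isCaterpillar]
      constructor
      · rintro ⟨hs, hleaf | hleaf, hl, hr⟩ <;> subst hleaf
        · exact .inl ⟨r, ⟨by simp only [size] at hs; omega, hr⟩, rfl, rfl⟩
        · exact .inr ⟨l, ⟨by simp only [size] at hs; omega, hl⟩, rfl, rfl⟩
      · rintro (⟨r, ⟨hs, hr⟩, rfl, rfl⟩ | ⟨l, ⟨hs, hl⟩, rfl, rfl⟩)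
        · exact ⟨by simp only [size]; omega, .inl rfl, trivial, hr⟩
        · exact ⟨by simp only [size]; omega, .inr rfl, hl, trivial⟩
  have hdisj : Disjoint (C.image (node leaf)) (C.image (node · leaf)) := by
    simp only [disjoint_left, mem_image, C, mem_filter, mem_ofSize]
    rintro _ ⟨r, -, rfl⟩ ⟨l, ⟨hl, -⟩, heq⟩
    rw [(node.inj heq).1, size] at hl
    omega
  rw [hsplit, card_union_of_disjoint hdisj, card_image_of_injective _ fun _ _ h => (node.inj h).2,
    card_image_of_injective _ fun _ _ h => (node.inj h).1, two_mul]

theorem eq_node_leaf_leaf_of_size_eq_two {t : BTree} (ht : t.size = 2) : t = node leaf leaf := by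
  cases t with
  | leaf => simp [size] at ht
  | node l r =>
    have := l.one_le_size
    have := r.one_le_size
    rw [size] at ht
    rw [size_eq_one_iff.1 (by omega : l.size = 1), size_eq_one_iff.1 (by omega : r.size = 1)]

open scoped Classical in
theorem card_caterpillars {n : ℕ} (hn : 2 ≤ n) :
    #{t ∈ ofSize n | t.isCaterpillar} = 2 ^ (n - 2) := by
  induction n, hn using Nat.le_induction with
  | base =>
    rw [Nat.sub_self, pow_zero, card_eq_one]
    refine ⟨node leaf leaf, ext fun t => ?_⟩
    simp only [mem_filter, mem_ofSize, mem_singleton]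
    constructor
    · exact fun h => eq_node_leaf_leaf_of_size_eq_two h.1
    · rintro rfl
      exact ⟨rfl, .inl rfl, trivial, trivial⟩
  | succ n hn ih =>
    rw [card_caterpillars_succ hn, ih, ← pow_succ']
    congr 1
    omega

open scoped Classical in
theorem card_filter_exists_node_gamma_le {k n : ℕ} (hn : 2 ≤ n) :
    #{t ∈ ofSize n | ∃ l r, t = node l r ∧ l.gamma ≤ k ∧ r.gamma ≤ k} =
      #{t ∈ ofSize n | t.gamma ≤ k} + if n = k + 1 then 2 ^ (k - 1) else 0 := by
  rw [filter_congr fun t ht => exists_node_gamma_le_iff (mem_ofSize.1 ht ▸ hn), filter_or,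
    card_union_of_disjoint
      (disjoint_filter.2 fun _ _ h h' => not_gamma_le_of_isCaterpillar h'.1 h'.2 h)]
  congr 1
  split_ifs with h
  · subst h
    rw [show k - 1 = k + 1 - 2 by omega, ← card_caterpillars hn]
    exact congrArg card (filter_congr fun t ht => and_iff_left (mem_ofSize.1 ht))
  · rw [card_eq_zero, filter_eq_empty_iff]
    exact fun t ht hc => h (mem_ofSize.1 ht ▸ hc.2)

end BTree

open BTree

theorem fcount_eq_card (k n : ℕ) : fcount k n = #{t ∈ ofSize n | t.gamma ≤ k} := by
  rw [fcount, ← Nat.card_eq_finsetCard]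
  exact Nat.card_congr (Equiv.subtypeEquivRight fun t => by simp [mem_ofSize])

/-- Recurrence for `f_k(n)`, the number of ordered rooted binary trees of size `n`
with largest caterpillar subtree of size at most `k ≥ 2`:
`f_k(1) = 1` and for `n ≥ 2`,
`f_k(n) = Σ_{i=1}^{n−1} f_k(i) f_k(n−i) − [n = k+1]·2^{k−1}`. -/
theorem fcount_recurrence (k : ℕ) (hk : 2 ≤ k) :
    fcount k 1 = 1 ∧
      ∀ n : ℕ, 2 ≤ n →
        (fcount k n : ℤ) =
          (∑ i ∈ Finset.Ico 1 n, (fcount k i : ℤ) * (fcount k (n - i) : ℤ)) -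
            (if n = k + 1 then 2 ^ (k - 1) else 0) := by
  refine ⟨?_, fun n hn => ?_⟩
  · rw [fcount_eq_card, ofSize, filter_singleton, if_pos (gamma_leaf.trans_le (by omega)),
      card_singleton]
  · have h := sum_card_mul_card_eq_card_node (·.gamma ≤ k) n
    rw [card_filter_exists_node_gamma_le hn] at h
    simp only [fcount_eq_card, eq_sub_iff_add_eq]
    exact_mod_cast h.symm
end

section
/- For k ≥ 2, there is no ordered rooted binary tree of size k+1 whose largest caterpillar subtree has size exactly k. -/
lemma BTree.size_pos (t : BTree) : 1 ≤ t.size := by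
  induction t with
  | leaf => simp [BTree.size]
  | node l r ihl ihr => simp [BTree.size]; omega

lemma BTree.size_le_of_mem (s t : BTree) (h : s ∈ t.subtrees) : s.size ≤ t.size := by
  induction t with
  | leaf => simp [BTree.subtrees] at h; subst h; rfl
  | node l r ihl ihr =>
    simp [BTree.subtrees] at h
    rcases h with h | h | h
    · subst h; rfl
    · have := ihl h; have := r.size_pos; simp [BTree.size]; omega
    · have := ihr h; have := l.size_pos; simp [BTree.size]; omega

lemma BTree.eq_of_mem_size (s t : BTree) (h : s ∈ t.subtrees) (hs : s.size = t.size) : s = t := by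
  induction t with
  | leaf => simpa [BTree.subtrees] using h
  | node l r ihl ihr =>
    simp [BTree.subtrees] at h
    rcases h with h | h | h
    · exact h
    · have := BTree.size_le_of_mem s l h; have := r.size_pos
      simp [BTree.size] at hs; omega
    · have := BTree.size_le_of_mem s r h; have := l.size_pos
      simp [BTree.size] at hs; omega

lemma BTree.self_mem (t : BTree) : t ∈ t.subtrees := by
  cases t <;> simp [BTree.subtrees]

lemma BTree.leaf_mem (t : BTree) : BTree.leaf ∈ t.subtrees := by
  induction t with
  | leaf => simp [BTree.subtrees]
  | node l r ihl ihr => simp [BTree.subtrees]; tauto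

lemma BTree.gammaSet_bdd (t : BTree) :
    BddAbove {m | ∃ s ∈ t.subtrees, s.isCaterpillar ∧ s.size = m} := by
  refine ⟨t.size, fun m hm => ?_⟩
  obtain ⟨s, hs, _, rfl⟩ := hm
  exact BTree.size_le_of_mem s t hs

lemma BTree.gammaSet_ne (t : BTree) :
    {m | ∃ s ∈ t.subtrees, s.isCaterpillar ∧ s.size = m}.Nonempty :=
  ⟨1, BTree.leaf, t.leaf_mem, trivial, rfl⟩

lemma BTree.le_gamma (t s : BTree) (h : s ∈ t.subtrees) (hc : s.isCaterpillar) :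
    s.size ≤ t.gamma :=
  le_csSup t.gammaSet_bdd ⟨s, h, hc, rfl⟩

lemma BTree.gamma_mem (t : BTree) :
    ∃ s ∈ t.subtrees, s.isCaterpillar ∧ s.size = t.gamma :=
  Nat.sSup_mem t.gammaSet_ne t.gammaSet_bdd

/-- For `k ≥ 2`, there is no ordered rooted binary tree of size `k+1`
whose largest caterpillar subtree has size exactly `k`. -/
theorem no_tree_of_size_succ_gamma_eq (k : ℕ) (hk : 2 ≤ k) :
    ¬ ∃ t : BTree, t.size = k + 1 ∧ t.gamma = k := by
  rintro ⟨t, hsz, hg⟩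
  obtain ⟨s, hs, hcat, hss⟩ := t.gamma_mem
  rw [hg] at hss
  cases t with
  | leaf => simp [BTree.size] at hsz; omega
  | node l r =>
    simp [BTree.size] at hsz
    simp [BTree.subtrees] at hs
    have hcatnode : (BTree.node l r).isCaterpillar := by
      rcases hs with h | h | h
      · subst h; simp [BTree.size] at hss; omega
      · -- s in l's subtrees: size s ≤ size l, so size l ≥ k, size r = 1, r = leaf
        have h1 := BTree.size_le_of_mem s l h
        have h2 := r.size_pos
        have hrl : r.size = 1 := by omega
        have hr : r = BTree.leaf := by
          cases r with
          | leaf => rfl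
          | node a b => have := a.size_pos; have := b.size_pos; simp [BTree.size] at hrl; omega
        have hls : s.size = l.size := by omega
        have := BTree.eq_of_mem_size s l h hls
        subst this; subst hr
        exact ⟨Or.inr rfl, hcat, trivial⟩
      · have h1 := BTree.size_le_of_mem s r h
        have h2 := l.size_pos
        have hll : l.size = 1 := by omega
        have hl : l = BTree.leaf := by
          cases l with
          | leaf => rfl
          | node a b => have := a.size_pos; have := b.size_pos; simp [BTree.size] at hll; omega
        have hrs : s.size = r.size := by omega
        have := BTree.eq_of_mem_size s r h hrs
        subst this; subst hl
        exact ⟨Or.inl rfl, trivial, hcat⟩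
    have := BTree.le_gamma (BTree.node l r) (BTree.node l r) (BTree.self_mem _) hcatnode
    rw [hg] at this
    simp [BTree.size] at this
    omega
end

section
/- For k ≥ 2, let ρ_k be the smallest positive real root of 1 − 4x + 2^{k+1}x^{k+1} = 0. Then (1/4)(1 + 1/2^{k+1}) < ρ_k < (1/4)(1 + (4/5)^{k+1}). -/
/-- For `k ≥ 2`, the smallest positive real root `ρ_k` of `1 − 4x + 2^{k+1}x^{k+1} = 0`
satisfies `(1/4)(1 + 1/2^{k+1}) < ρ_k < (1/4)(1 + (4/5)^{k+1})`. -/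
theorem rho_bounds (k : ℕ) (hk : 2 ≤ k) (ρ : ℝ) (hpos : 0 < ρ)
    (hroot : 1 - 4 * ρ + 2 ^ (k + 1) * ρ ^ (k + 1) = 0)
    (hmin : ∀ x : ℝ, 0 < x → 1 - 4 * x + 2 ^ (k + 1) * x ^ (k + 1) = 0 → ρ ≤ x) :
    (1 / 4) * (1 + 1 / 2 ^ (k + 1)) < ρ ∧ ρ < (1 / 4) * (1 + (4 / 5) ^ (k + 1)) := by
  set n := k + 1 with hn
  have hn3 : 3 ≤ n := by omega
  have h2pow : (0:ℝ) < 2 ^ n := by positivity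
  have key : (2:ℝ)^n * (1/4:ℝ)^n = 1 / 2^n := by
    rw [← mul_pow, ← one_div_pow]; norm_num
  set a : ℝ := (1/4) * (1 + 1/2^n) with ha
  have ha4 : (1/4 : ℝ) < a := by
    rw [ha]; nlinarith [one_div_pos.mpr h2pow]
  have hfa : ∀ x : ℝ, 0 < x → x ≤ a → 0 < 1 - 4*x + 2^n * x^n := by
    intro x hx hxa
    rcases le_or_gt x (1/4) with h1 | h1
    · have hxp := pow_pos hx n
      nlinarith
    · have hp : (1/4:ℝ)^n < x^n := pow_lt_pow_left₀ h1 (by norm_num) (by omega)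
      have h2 : 1/2^n < 2^n * x^n := by
        calc (1:ℝ)/2^n = 2^n * (1/4)^n := key.symm
        _ < 2^n * x^n := (mul_lt_mul_iff_right₀ h2pow).mpr hp
      have h3 : 1 - 4*x ≥ -(1/2^n) := by rw [ha] at hxa; linarith
      linarith
  have hlow : a < ρ := by
    by_contra h
    push_neg at h
    have := hfa ρ hpos h
    linarith
  refine ⟨hlow, ?_⟩
  set b : ℝ := (1/4) * (1 + (4/5)^n) with hb
  have hpow45pos : (0:ℝ) < (4/5)^n := by positivity
  have hpow45 : ((4:ℝ)/5)^n ≤ (4/5)^3 :=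
    pow_le_pow_of_le_one (by norm_num) (by norm_num) hn3
  have hab : a < b := by
    have : (1:ℝ)/2^n < (4/5)^n := by
      have h1 : ((1:ℝ)/2)^n < (4/5)^n :=
        pow_lt_pow_left₀ (by norm_num) (by norm_num) (by omega)
      rwa [one_div_pow] at h1
    rw [ha, hb]; linarith
  have hfb : 1 - 4*b + 2^n * b^n < 0 := by
    have h2b0 : (0:ℝ) < 2*b := by rw [hb]; positivity
    have h2b : 2*b < 4/5 := by rw [hb]; nlinarith
    have heq : (2:ℝ)^n * b^n = (2*b)^n := (mul_pow 2 b n).symm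
    have hlt : (2*b)^n < (4/5)^n := pow_lt_pow_left₀ h2b h2b0.le (by omega)
    have h4b : 1 - 4*b = -(4/5)^n := by rw [hb]; ring
    rw [heq]; linarith
  have hcont : ContinuousOn (fun x : ℝ => 1 - 4*x + 2^n * x^n) (Set.Icc a b) := by
    apply Continuous.continuousOn
    continuity
  have hfa0 : 0 < 1 - 4*a + 2^n * a^n := hfa a (by linarith) le_rfl
  obtain ⟨x, hx, hfx⟩ := intermediate_value_Ioo' hab.le hcont
    (Set.mem_Ioo.mpr ⟨hfb, hfa0⟩)
  have hxpos : 0 < x := by have := hx.1; linarith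
  have hfx' : 1 - 4*x + 2^n * x^n = 0 := hfx
  have := hmin x hxpos (by linarith [hfx'])
  calc ρ ≤ x := this
  _ < b := hx.2
end

section
/- ρ_k = 1/4 + 1/2^{k+3} + O(k (2/5)^k) as k → ∞, where ρ_k is the smallest positive root of 1 − 4x + 2^{k+1}x^{k+1} = 0. -/
lemma pow_sub_pow_le_aux (n : ℕ) {a b M : ℝ} (hb : 0 ≤ b) (hba : b ≤ a) (haM : a ≤ M) :
    a ^ (n + 1) - b ^ (n + 1) ≤ ((n : ℝ) + 1) * M ^ n * (a - b) := by
  induction n with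
  | zero => simp
  | succ n ih =>
    have ha : 0 ≤ a := hb.trans hba
    have hM : 0 ≤ M := ha.trans haM
    have h1 : 0 ≤ a ^ (n + 1) - b ^ (n + 1) := by
      have := pow_le_pow_left₀ hb hba (n + 1); linarith
    have h2 : b ^ (n + 1) ≤ M ^ (n + 1) := pow_le_pow_left₀ hb (hba.trans haM) _
    have hMn : 0 ≤ M ^ n := pow_nonneg hM n
    have e1 : a * (a ^ (n + 1) - b ^ (n + 1)) ≤ M * (((n : ℝ) + 1) * M ^ n * (a - b)) :=
      mul_le_mul haM ih h1 hM
    have e2 : (a - b) * b ^ (n + 1) ≤ (a - b) * M ^ (n + 1) :=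
      mul_le_mul_of_nonneg_left h2 (by linarith)
    have key : a ^ (n + 2) - b ^ (n + 2)
        = a * (a ^ (n + 1) - b ^ (n + 1)) + (a - b) * b ^ (n + 1) := by ring
    have : a ^ (n + 2) - b ^ (n + 2)
        ≤ M * (((n : ℝ) + 1) * M ^ n * (a - b)) + (a - b) * M ^ (n + 1) := by
      rw [key]; linarith
    refine this.trans (le_of_eq ?_)
    push_cast; ring

set_option maxHeartbeats 1000000 in
/-- `ρ_k = 1/4 + 1/2^{k+3} + O(k (2/5)^k)` as `k → ∞`, where `ρ_k` is the smallest
positive root of `1 − 4x + 2^{k+1}x^{k+1} = 0`. -/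
theorem rho_asymptotic (ρ : ℕ → ℝ)
    (h : ∀ k : ℕ, 2 ≤ k →
      0 < ρ k ∧ 1 - 4 * ρ k + 2 ^ (k + 1) * ρ k ^ (k + 1) = 0 ∧
        ∀ x : ℝ, 0 < x → 1 - 4 * x + 2 ^ (k + 1) * x ^ (k + 1) = 0 → ρ k ≤ x) :
    ∃ C : ℝ, ∃ K : ℕ, ∀ k : ℕ, K ≤ k →
      |ρ k - 1 / 4 - 1 / 2 ^ (k + 3)| ≤ C * k * (2 / 5) ^ k := by
  refine ⟨1, 3, fun k hk => ?_⟩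
  obtain ⟨hpos, heq, hmin⟩ := h k (by omega)
  -- a root in [1/4, 3/10] via IVT
  have hcont : ContinuousOn (fun x : ℝ => 1 - 4 * x + 2 ^ (k + 1) * x ^ (k + 1))
      (Set.Icc (1/4) (3/10)) := (by continuity : Continuous _).continuousOn
  have hfa : (0 : ℝ) ≤ 1 - 4 * (1/4) + 2 ^ (k + 1) * (1/4 : ℝ) ^ (k + 1) := by
    have e : (2 : ℝ) ^ (k + 1) * (1/4 : ℝ) ^ (k + 1) = (1/2 : ℝ) ^ (k + 1) := by
      rw [← mul_pow]; norm_num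
    rw [e]; positivity
  have hfb : 1 - 4 * (3/10 : ℝ) + 2 ^ (k + 1) * (3/10 : ℝ) ^ (k + 1) ≤ 0 := by
    have e : (2 : ℝ) ^ (k + 1) * (3/10 : ℝ) ^ (k + 1) = (3/5 : ℝ) ^ (k + 1) := by
      rw [← mul_pow]; norm_num
    have h4 : (3/5 : ℝ) ^ (k + 1) ≤ (3/5 : ℝ) ^ 4 :=
      pow_le_pow_of_le_one (by norm_num) (by norm_num) (by omega)
    rw [e]; nlinarith
  obtain ⟨x, hx, hfx⟩ := intermediate_value_Icc' (by norm_num : (1/4 : ℝ) ≤ 3/10) hcont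
    ⟨hfb, hfa⟩
  have hxpos : (0 : ℝ) < x := lt_of_lt_of_le (by norm_num) hx.1
  have hr3 : ρ k ≤ 3/10 := (hmin x hxpos hfx).trans hx.2
  -- key identity
  rw [← mul_pow] at heq
  have hkey : ρ k - 1/4 = (2 * ρ k) ^ (k + 1) / 4 := by linarith
  have hq : (1/4 : ℝ) < ρ k := by
    nlinarith [pow_pos (mul_pos (by norm_num : (0:ℝ) < 2) hpos) (k + 1)]
  set a := 2 * ρ k with ha_def
  have ha1 : (1/2 : ℝ) < a := by rw [ha_def]; linarith
  have ha2 : a ≤ 3/5 := by rw [ha_def]; linarith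
  have ha0 : (0 : ℝ) ≤ a := by linarith
  have haub : a ^ (k + 1) ≤ (3/5 : ℝ) ^ (k + 1) := pow_le_pow_left₀ ha0 ha2 _
  have hdiff : a - 1/2 = a ^ (k + 1) / 2 := by rw [ha_def]; linarith [hkey]
  have hsub : a ^ (k + 1) - (1/2 : ℝ) ^ (k + 1) ≤ ((k : ℝ) + 1) * (3/5) ^ k * (a - 1/2) :=
    pow_sub_pow_le_aux k (by norm_num) ha1.le ha2
  have hnn : (0 : ℝ) ≤ a ^ (k + 1) - (1/2 : ℝ) ^ (k + 1) :=
    sub_nonneg.2 (pow_le_pow_left₀ (by norm_num) ha1.le _)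
  have hexpr : ρ k - 1/4 - 1 / 2 ^ (k + 3) = (a ^ (k + 1) - (1/2 : ℝ) ^ (k + 1)) / 4 := by
    have e2 : (2:ℝ) ^ (k + 3) = 2 ^ (k + 1) * 4 := by ring
    have h12 : ((1:ℝ)/2) ^ (k + 1) / 4 = 1 / 2 ^ (k + 3) := by
      rw [div_pow, one_pow, div_div, e2]
    linarith [hkey, h12]
  rw [hexpr, abs_of_nonneg (div_nonneg hnn (by norm_num))]
  -- final estimate
  have hA : ((9 : ℝ)/25) ^ k ≤ (2/5 : ℝ) ^ k := pow_le_pow_left₀ (by norm_num) (by norm_num) k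
  have h35 : ((3:ℝ)/5) ^ k * (3/5 : ℝ) ^ (k + 1) = (3/5) * (9/25 : ℝ) ^ k := by
    have e : ((9:ℝ)/25) = (3/5) * (3/5) := by norm_num
    rw [e, mul_pow, pow_succ]; ring
  have hk3 : (3 : ℝ) ≤ (k : ℝ) := by exact_mod_cast hk
  have hstep : a ^ (k + 1) - (1/2 : ℝ) ^ (k + 1)
      ≤ ((k : ℝ) + 1) * (3/5) ^ k * ((3/5 : ℝ) ^ (k + 1) / 2) := by
    have : (a - 1/2) ≤ (3/5 : ℝ) ^ (k + 1) / 2 := by linarith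
    have hc : (0 : ℝ) ≤ ((k : ℝ) + 1) * (3/5) ^ k := by positivity
    calc a ^ (k + 1) - (1/2 : ℝ) ^ (k + 1)
        ≤ ((k : ℝ) + 1) * (3/5) ^ k * (a - 1/2) := hsub
      _ ≤ ((k : ℝ) + 1) * (3/5) ^ k * ((3/5 : ℝ) ^ (k + 1) / 2) :=
          mul_le_mul_of_nonneg_left this hc
  have hfin : ((k : ℝ) + 1) * (3/5) ^ k * ((3/5 : ℝ) ^ (k + 1) / 2) / 4
      ≤ 1 * (k : ℝ) * (2/5) ^ k := by
    have h925 : (0 : ℝ) ≤ (9/25 : ℝ) ^ k := by positivity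
    have h25 : (0 : ℝ) ≤ (2/5 : ℝ) ^ k := by positivity
    calc ((k : ℝ) + 1) * (3/5) ^ k * ((3/5 : ℝ) ^ (k + 1) / 2) / 4
        = ((k : ℝ) + 1) / 8 * ((3/5 : ℝ) ^ k * (3/5) ^ (k + 1)) := by ring
      _ = ((k : ℝ) + 1) * (3/40) * (9/25 : ℝ) ^ k := by rw [h35]; ring
      _ ≤ 1 * (k : ℝ) * (2/5) ^ k := by
          nlinarith [mul_le_mul_of_nonneg_left hA (by linarith : (0:ℝ) ≤ (k:ℝ)), hA, h925,
            h25, hk3]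
  calc (a ^ (k + 1) - (1/2 : ℝ) ^ (k + 1)) / 4
      ≤ ((k : ℝ) + 1) * (3/5) ^ k * ((3/5 : ℝ) ^ (k + 1) / 2) / 4 := by linarith
    _ ≤ 1 * (k : ℝ) * (2/5) ^ k := hfin
end
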